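/- Let ν > 0 and z > 0 be real numbers. Then the function t ↦ I_ν(t)²/t is integrable on (0, z) and ∫_0^z I_ν(t)²/t dt = (z/2)^{2ν} / (2ν · Γ(ν+1)²) · ₂F₃(ν, ν+1/2; ν+1, ν+1, 2ν+1; z²). -/

import Mathlib

open Real MeasureTheory Filter

/-- Pochhammer symbol `(a)_k = a (a+1) ⋯ (a+k-1)`. -/
noncomputable def poch (a : ℝ) (k : ℕ) : ℝ := ∏ i ∈ Finset.range k, (a + i)

/-- Generalized hypergeometric function `ₚF_q(a; b; x)`. -/
noncomputable def genHyp (a b : List ℝ) (x : ℝ) : ℝ :=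
  ∑' k : ℕ, ((a.map (fun c => poch c k)).prod / (b.map (fun c => poch c k)).prod)
    * x ^ k / (Nat.factorial k : ℝ)

/-- Bessel function of the first kind `J_ν(x)`. -/
noncomputable def besselJ (ν x : ℝ) : ℝ :=
  (x / 2) ^ ν * ∑' k : ℕ, (-1 : ℝ) ^ k * (x / 2) ^ (2 * k) /
    ((Nat.factorial k : ℝ) * Real.Gamma (ν + k + 1))

/-- Modified Bessel function of the first kind `I_ν(x)`. -/
noncomputable def besselI (ν x : ℝ) : ℝ :=
  (x / 2) ^ ν * ∑' k : ℕ, (x / 2) ^ (2 * k) /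
    ((Nat.factorial k : ℝ) * Real.Gamma (ν + k + 1))

/-- Bessel function of the second kind `Y_ν(x)` (non-integer order). -/
noncomputable def besselY (ν x : ℝ) : ℝ :=
  (besselJ ν x * Real.cos (π * ν) - besselJ (-ν) x) / Real.sin (π * ν)

/-- Macdonald function `K_ν(x)` (non-integer order). -/
noncomputable def besselK (ν x : ℝ) : ℝ :=
  (π / 2) * (besselI (-ν) x - besselI ν x) / Real.sin (π * ν)

/-- Digamma function `ψ(x) = Γ'(x)/Γ(x)`. -/
noncomputable def digam (x : ℝ) : ℝ := deriv Real.Gamma x / Real.Gamma x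
/-! Squaring the series of `I_ν` by the Cauchy product gives
`I_ν(t)² = (t/2)^{2ν} ∑ₙ cₙ (t/2)^{2n}` with `cₙ = (2ν+n+1)_n / (n! Γ(ν+n+1)²)`: writing
`Γ(ν+n+1) / Γ(ν+k+1)` as a falling factorial of `ν+n`, the closed form of `cₙ` is the
Chu–Vandermonde identity. All terms are nonnegative, so the series of `I_ν(t)²/t` may be
integrated termwise over `(0, z)`, and the duplication formula `(2ν)_{2n} = 4ⁿ (ν)_n (ν+1/2)_n`
turns the resulting coefficients into those of the `₂F₃`. -/

open Finset

lemma poch_succ (a : ℝ) (k : ℕ) : poch a (k + 1) = poch a k * (a + k) :=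
  prod_range_succ _ _

lemma poch_add (a : ℝ) (k m : ℕ) : poch a (k + m) = poch a k * poch (a + k) m := by
  simp only [poch, prod_range_add, Nat.cast_add, add_assoc]

lemma poch_pos {a : ℝ} (ha : 0 < a) (k : ℕ) : 0 < poch a k :=
  prod_pos fun i _ => by positivity

lemma one_le_poch {a : ℝ} (ha : 1 ≤ a) (k : ℕ) : 1 ≤ poch a k :=
  one_le_prod fun i _ => by linarith [(i.cast_nonneg : (0 : ℝ) ≤ i)]

lemma poch_eq_ascPochhammer_eval (a : ℝ) (k : ℕ) : poch a k = (ascPochhammer ℝ k).eval a := by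
  induction k with
  | zero => simp [poch]
  | succ k ih => rw [poch_succ, ih, ascPochhammer_succ_eval]

lemma sum_antidiagonal_choose_mul_poch (x y : ℝ) (n : ℕ) :
    ∑ ij ∈ antidiagonal n,
        (n.choose ij.1 : ℝ) * (poch (x - ij.1 + 1) ij.1 * poch (y - ij.2 + 1) ij.2) =
      poch (x + y - n + 1) n := by
  have h := Ring.descPochhammer_smeval_add n (Commute.all x y)
  simp only [Polynomial.descPochhammer_smeval_eq_ascPochhammer,
    Polynomial.ascPochhammer_smeval_eq_eval, ← poch_eq_ascPochhammer_eval] at h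
  exact h.symm

lemma poch_two_mul (a : ℝ) (n : ℕ) :
    poch (2 * a) (2 * n) = 4 ^ n * poch a n * poch (a + 1 / 2) n := by
  induction n with
  | zero => simp [poch]
  | succ n ih =>
    rw [mul_add_one, poch_succ, poch_succ, ih, poch_succ, poch_succ]
    push_cast
    ring

lemma two_mul_mul_poch_mul_poch (a : ℝ) (n : ℕ) :
    2 * a * poch (2 * a + 1) n * poch (2 * a + n + 1) n =
      4 ^ n * poch a n * poch (a + 1 / 2) n * (2 * a + 2 * n) :=
  calc 2 * a * poch (2 * a + 1) n * poch (2 * a + n + 1) n = poch (2 * a) (1 + (n + n)) := by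
        rw [poch_add, poch_add]
        simp only [poch, range_one, prod_singleton, Nat.cast_zero, Nat.cast_one]
        ring_nf
    _ = poch (2 * a) (2 * n) * (2 * a + 2 * n) := by
        rw [show 1 + (n + n) = 2 * n + 1 by ring, poch_succ]
        push_cast
        ring
    _ = _ := by rw [poch_two_mul]

lemma Gamma_add_nat_eq_poch_mul {x : ℝ} (hx : 0 < x) (n : ℕ) :
    Gamma (x + n) = poch x n * Gamma x := by
  induction n with
  | zero => simp [poch]
  | succ n ih =>
    rw [Nat.cast_succ, ← add_assoc, Gamma_add_one (by positivity), ih, poch_succ]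
    ring

noncomputable def besselISqCoeff (ν : ℝ) (n : ℕ) : ℝ :=
  poch (2 * ν + n + 1) n / (n.factorial * Gamma (ν + n + 1) ^ 2)

lemma sum_antidiagonal_eq_besselISqCoeff {ν : ℝ} (hν : -1 < ν) (n : ℕ) :
    ∑ ij ∈ antidiagonal n, 1 / (ij.1.factorial * Gamma (ν + ij.1 + 1)) *
      (1 / (ij.2.factorial * Gamma (ν + ij.2 + 1))) = besselISqCoeff ν n := by
  have hx : (ν + n) + (ν + n) - n + 1 = 2 * ν + n + 1 := by ring
  rw [besselISqCoeff, ← hx, ← sum_antidiagonal_choose_mul_poch, sum_div]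
  refine sum_congr rfl fun ⟨i, j⟩ hij => ?_
  obtain rfl : i + j = n := mem_antidiagonal.mp hij
  have hpos {k : ℕ} : 0 < ν + k + 1 := by linarith [(k.cast_nonneg : (0 : ℝ) ≤ k)]
  have hΓ {k l : ℕ} : Gamma (ν + ↑(k + l) + 1) = poch (ν + l + 1) k * Gamma (ν + l + 1) := by
    rw [← Gamma_add_nat_eq_poch_mul hpos]
    push_cast
    ring_nf
  have hΓsq : Gamma (ν + ↑(i + j) + 1) ^ 2 =
      poch (ν + j + 1) i * Gamma (ν + j + 1) * (poch (ν + i + 1) j * Gamma (ν + i + 1)) := by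
    rw [sq]
    nth_rw 2 [add_comm i j]
    rw [hΓ, hΓ]
  have hfac : ((i + j).factorial : ℝ) = (i + j).choose i * i.factorial * j.factorial := by
    rw [Nat.choose_symm_add]
    exact_mod_cast (Nat.add_choose_mul_factorial_mul_factorial i j).symm
  have hi : ν + ↑(i + j) - i + 1 = ν + j + 1 := by push_cast; ring
  have hj : ν + ↑(i + j) - j + 1 = ν + i + 1 := by push_cast; ring
  have := poch_pos (hpos (k := j)) i
  have := poch_pos (hpos (k := i)) j
  have := Gamma_pos_of_pos (hpos (k := i))
  have := Gamma_pos_of_pos (hpos (k := j))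
  have := Nat.choose_pos (Nat.le_add_right i j)
  rw [hi, hj, hΓsq, hfac]
  field_simp

lemma besselISqCoeff_nonneg {ν : ℝ} (hν : -1 < ν) (n : ℕ) : 0 ≤ besselISqCoeff ν n := by
  rw [← sum_antidiagonal_eq_besselISqCoeff hν]
  refine sum_nonneg fun ij _ => ?_
  have hpos (k : ℕ) : 0 < Gamma (ν + k + 1) :=
    Gamma_pos_of_pos (by linarith [(k.cast_nonneg : (0 : ℝ) ≤ k)])
  have := hpos ij.1
  have := hpos ij.2
  positivity

lemma besselISqCoeff_mul_div {ν : ℝ} (hν : 0 < ν) (x : ℝ) (n : ℕ) :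
    besselISqCoeff ν n * ((x / 2) ^ (2 * ν) * ((x / 2) ^ 2) ^ n / (2 * ν + 2 * n)) =
      (x / 2) ^ (2 * ν) / (2 * ν * Gamma (ν + 1) ^ 2) *
        (poch ν n * poch (ν + 1 / 2) n / (poch (ν + 1) n * (poch (ν + 1) n * poch (2 * ν + 1) n))
          * (x ^ 2) ^ n / n.factorial) := by
  have hΓ : Gamma (ν + n + 1) = poch (ν + 1) n * Gamma (ν + 1) := by
    rw [add_right_comm, Gamma_add_nat_eq_poch_mul (by linarith)]
  have key := two_mul_mul_poch_mul_poch ν n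
  have := Gamma_pos_of_pos (show 0 < ν + 1 by linarith)
  have := poch_pos (show 0 < ν + 1 by linarith) n
  have := poch_pos (show 0 < 2 * ν + 1 by linarith) n
  have := n.factorial_pos
  rw [besselISqCoeff, hΓ, div_pow x 2 2, div_pow]
  generalize poch (ν + 1 / 2) n = P at key ⊢
  field_simp
  linear_combination (x / 2) ^ (2 * ν) * x ^ (n * 2) / 2 * key

lemma summable_norm_pow_div_factorial_mul_Gamma {ν : ℝ} (hν : 0 ≤ ν) (x : ℝ) :
    Summable fun k : ℕ => ‖x ^ k / (k.factorial * Gamma (ν + k + 1))‖ := by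
  have hΓ : 0 < Gamma (ν + 1) := Gamma_pos_of_pos (by linarith)
  refine .of_nonneg_of_le (fun _ => norm_nonneg _) (fun k => ?_)
    ((Real.summable_pow_div_factorial |x|).div_const (Gamma (ν + 1)))
  have hΓk : Gamma (ν + 1) ≤ Gamma (ν + k + 1) := by
    rw [add_right_comm, Gamma_add_nat_eq_poch_mul (by linarith)]
    exact le_mul_of_one_le_left hΓ.le (one_le_poch (by linarith) k)
  rw [norm_div, norm_pow, Real.norm_eq_abs, div_div, norm_of_nonneg (by positivity)]
  gcongr

lemma hasSum_besselI_sq {ν t : ℝ} (hν : 0 ≤ ν) (ht : 0 ≤ t) :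
    HasSum (fun n => besselISqCoeff ν n * ((t / 2) ^ (2 * ν) * ((t / 2) ^ 2) ^ n))
      (besselI ν t ^ 2) := by
  set x := (t / 2) ^ 2
  have hs := summable_norm_pow_div_factorial_mul_Gamma hν x
  have hcauchy := (summable_norm_sum_mul_antidiagonal_of_summable_norm hs hs).of_norm.hasSum
  rw [← tsum_mul_tsum_eq_tsum_sum_antidiagonal_of_summable_norm hs hs, ← sq] at hcauchy
  have hcoeff (n : ℕ) : ∑ ij ∈ antidiagonal n, x ^ ij.1 / (ij.1.factorial * Gamma (ν + ij.1 + 1)) *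
      (x ^ ij.2 / (ij.2.factorial * Gamma (ν + ij.2 + 1))) = besselISqCoeff ν n * x ^ n := by
    rw [← sum_antidiagonal_eq_besselISqCoeff (by linarith) n, sum_mul]
    refine sum_congr rfl fun ij hij => ?_
    rw [← mem_antidiagonal.mp hij, pow_add]
    ring
  have hI : besselI ν t ^ 2 =
      (t / 2) ^ (2 * ν) * (∑' k : ℕ, x ^ k / (k.factorial * Gamma (ν + k + 1))) ^ 2 := by
    rw [besselI, mul_pow, ← rpow_natCast, ← rpow_mul (by positivity)]
    simp only [x, ← pow_mul]
    ring_nf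
  rw [hI]
  simpa only [hcoeff, mul_left_comm] using hcauchy.mul_left ((t / 2) ^ (2 * ν))

lemma half_rpow_div_self {s t : ℝ} (ht : 0 < t) : (t / 2) ^ s / t = (2 ^ s)⁻¹ * t ^ (s - 1) := by
  rw [div_rpow ht.le (by norm_num), rpow_sub_one ht.ne']
  ring

lemma integrableOn_half_rpow_div_self {s : ℝ} (hs : 0 < s) (z : ℝ) :
    IntegrableOn (fun t => (t / 2) ^ s / t) (Set.Ioo 0 z) := by
  have h := (intervalIntegral.intervalIntegrable_rpow' (a := 0) (b := z) (r := s - 1)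
    (by linarith)).1.mono_set Set.Ioo_subset_Ioc_self
  exact IntegrableOn.congr_fun (h.const_mul _) (fun t ht => (half_rpow_div_self ht.1).symm)
    measurableSet_Ioo

lemma integral_half_rpow_div_self {s z : ℝ} (hs : 0 < s) (hz : 0 ≤ z) :
    ∫ t in Set.Ioo 0 z, (t / 2) ^ s / t = (z / 2) ^ s / s := by
  rw [setIntegral_congr_fun measurableSet_Ioo fun t ht => half_rpow_div_self ht.1,
    integral_const_mul, ← integral_Ioc_eq_integral_Ioo, ← intervalIntegral.integral_of_le hz,
    integral_rpow (Or.inl (by linarith)), sub_add_cancel, zero_rpow hs.ne',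
    div_rpow hz (by norm_num)]
  ring

lemma half_rpow_mul_sq_pow {s t : ℝ} (hs : 0 < s) (ht : 0 ≤ t) (n : ℕ) :
    (t / 2) ^ s * ((t / 2) ^ 2) ^ n = (t / 2) ^ (s + 2 * n) := by
  rw [← pow_mul, ← rpow_natCast, ← rpow_add' (by positivity) (by positivity)]
  push_cast
  rfl

lemma integrableOn_half_rpow_mul_sq_pow_div_self {s : ℝ} (hs : 0 < s) (n : ℕ) (z : ℝ) :
    IntegrableOn (fun t => (t / 2) ^ s * ((t / 2) ^ 2) ^ n / t) (Set.Ioo 0 z) :=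
  IntegrableOn.congr_fun (integrableOn_half_rpow_div_self (s := s + 2 * n) (by positivity) z)
    (fun t ht => by rw [half_rpow_mul_sq_pow hs ht.1.le]) measurableSet_Ioo

lemma integral_half_rpow_mul_sq_pow_div_self {s z : ℝ} (hs : 0 < s) (hz : 0 ≤ z) (n : ℕ) :
    ∫ t in Set.Ioo 0 z, (t / 2) ^ s * ((t / 2) ^ 2) ^ n / t =
      (z / 2) ^ s * ((z / 2) ^ 2) ^ n / (s + 2 * n) := by
  rw [setIntegral_congr_fun measurableSet_Ioo fun t ht => by
      rw [half_rpow_mul_sq_pow hs ht.1.le],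
    integral_half_rpow_div_self (by positivity) hz, half_rpow_mul_sq_pow hs hz]

lemma summable_besselISqCoeff_mul_div {ν z : ℝ} (hν : 0 < ν) (hz : 0 ≤ z) :
    Summable fun n : ℕ =>
      besselISqCoeff ν n * ((z / 2) ^ (2 * ν) * ((z / 2) ^ 2) ^ n / (2 * ν + 2 * n)) := by
  have hterm (n : ℕ) : 0 ≤ besselISqCoeff ν n * ((z / 2) ^ (2 * ν) * ((z / 2) ^ 2) ^ n) :=
    mul_nonneg (besselISqCoeff_nonneg (by linarith) n) (by positivity)
  refine ((hasSum_besselI_sq hν.le hz).summable.div_const (2 * ν)).of_nonneg_of_le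
    (fun n => ?_) (fun n => ?_) <;> rw [← mul_div_assoc]
  · exact div_nonneg (hterm n) (by positivity)
  · exact div_le_div_of_nonneg_left (hterm n) (by positivity)
      (by linarith [(n.cast_nonneg : (0 : ℝ) ≤ n)])

/-- The series converges in `L¹`, and its `L¹` sum agrees a.e. with the pointwise sum. -/
lemma integrable_tsum_of_summable_integral_norm {α E ι : Type*} [MeasurableSpace α]
    {μ : Measure α} [NormedAddCommGroup E] [CompleteSpace E] [Countable ι] {F : ι → α → E}
    (hF_int : ∀ i, Integrable (F i) μ) (hF_sum : Summable fun i => ∫ a, ‖F i a‖ ∂μ) :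
    Integrable (fun a => ∑' i, F i a) μ := by
  have hL1 : ∑' i, ‖(hF_int i).toL1 (F i)‖ₑ ≠ ⊤ := by
    simp_rw [Integrable.enorm_toL1, ← ofReal_integral_norm_eq_lintegral_enorm (hF_int _),
      ← ENNReal.ofReal_tsum_of_nonneg (fun i => integral_nonneg fun a => norm_nonneg _) hF_sum]
    exact ENNReal.ofReal_ne_top
  refine (L1.integrable_coeFn (∑' i, (hF_int i).toL1 (F i))).congr ?_
  filter_upwards [Lp.coeFn_tsum hL1, ae_all_iff.2 fun i => (hF_int i).coeFn_toL1] with a h1 h2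
  rw [h1]
  exact tsum_congr h2

theorem besselI_sq_div_integral (ν z : ℝ) (hν : 0 < ν) (hz : 0 < z) :
    IntegrableOn (fun t => besselI ν t ^ 2 / t) (Set.Ioo 0 z) ∧
    ∫ t in Set.Ioo 0 z, besselI ν t ^ 2 / t =
      (z / 2) ^ (2 * ν) / (2 * ν * Real.Gamma (ν + 1) ^ 2) *
        genHyp [ν, ν + 1 / 2] [ν + 1, ν + 1, 2 * ν + 1] (z ^ 2) := by
  set F : ℕ → ℝ → ℝ := fun n t => besselISqCoeff ν n * ((t / 2) ^ (2 * ν) * ((t / 2) ^ 2) ^ n / t)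
  have hs : 0 < 2 * ν := by positivity
  have hF_int (n : ℕ) : IntegrableOn (F n) (Set.Ioo 0 z) :=
    (integrableOn_half_rpow_mul_sq_pow_div_self hs n z).const_mul _
  have hF_integral (n : ℕ) : ∫ t in Set.Ioo 0 z, F n t =
      besselISqCoeff ν n * ((z / 2) ^ (2 * ν) * ((z / 2) ^ 2) ^ n / (2 * ν + 2 * n)) := by
    rw [integral_const_mul, integral_half_rpow_mul_sq_pow_div_self hs hz.le]
  have hF_sum : Summable fun n => ∫ t in Set.Ioo 0 z, ‖F n t‖ := by
    refine (summable_besselISqCoeff_mul_div hν hz.le).congr fun n => ?_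
    rw [← hF_integral]
    exact setIntegral_congr_fun measurableSet_Ioo fun t ⟨ht, _⟩ =>
      (norm_of_nonneg (mul_nonneg (besselISqCoeff_nonneg (by linarith) n) (by positivity))).symm
  have hF_tsum : Set.EqOn (fun t => besselI ν t ^ 2 / t) (fun t => ∑' n, F n t) (Set.Ioo 0 z) :=
    fun t ht => by
      simpa only [F, mul_div_assoc] using ((hasSum_besselI_sq hν.le ht.1.le).div_const t).tsum_eq.symm
  refine ⟨IntegrableOn.congr_fun (integrable_tsum_of_summable_integral_norm hF_int hF_sum)
    hF_tsum.symm measurableSet_Ioo, ?_⟩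
  rw [setIntegral_congr_fun measurableSet_Ioo hF_tsum,
    ← integral_tsum_of_summable_integral_norm hF_int hF_sum]
  simp only [hF_integral, besselISqCoeff_mul_div hν, tsum_mul_left, genHyp, List.map_cons,
    List.map_nil, List.prod_cons, List.prod_nil, mul_one]
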